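/- Let 0 < a < b and define ξ_c = 2(a² + b²) + 4a²(a² − b²)/(a² + b²(K₂(m)/K₁(m) − 1)) with m = a/b, where K₁, K₂ are the complete elliptic integrals of the first and second kind. Then a² + b²(K₂(m)/K₁(m) − 1) > 0, so ξ_c is well-defined, and ξ_c < 4b². -/
import Mathlib


/-- Complete elliptic integral of the first kind. -/
noncomputable def K1 (m : ℝ) : ℝ := ∫ s in (0:ℝ)..1, 1 / Real.sqrt ((1 - s^2) * (1 - m^2*s^2))

/-- Complete elliptic integral of the second kind. -/
noncomputable def K2 (m : ℝ) : ℝ := ∫ s in (0:ℝ)..1, Real.sqrt (1 - m^2*s^2) / Real.sqrt (1 - s^2)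

open MeasureTheory intervalIntegral Set

-- the dominating function is integrable
lemma base_int : IntervalIntegrable (fun s : ℝ => (1 - s) ^ (-(1/2) : ℝ)) volume 0 1 := by
  have h := (intervalIntegral.intervalIntegrable_rpow' (a := 0) (b := 1)
    (r := -(1/2)) (by norm_num)).comp_sub_left 1
  simpa using h.symm

lemma g_int {m : ℝ} (hm0 : 0 < m) (hm1 : m < 1) :
    IntervalIntegrable (fun s : ℝ => 1 / Real.sqrt ((1 - s^2) * (1 - m^2*s^2))) volume 0 1 := by
  have hC : 0 < Real.sqrt (1 - m^2) := Real.sqrt_pos.mpr (by nlinarith)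
  have hmeas : Measurable (fun s : ℝ => 1 / Real.sqrt ((1 - s^2) * (1 - m^2*s^2))) := by
    fun_prop
  refine ((base_int.const_mul (1 / Real.sqrt (1 - m^2))).mono_fun
    (hmeas.aestronglyMeasurable) ?_)
  rw [Filter.EventuallyLE, ae_restrict_iff' measurableSet_uIoc]
  filter_upwards with s hs
  rw [Set.uIoc_of_le (by norm_num : (0:ℝ) ≤ 1)] at hs
  obtain ⟨hs0, hs1⟩ := hs
  rcases eq_or_lt_of_le hs1 with h1 | h1
  · subst h1
    simp
  · have hu : 0 < 1 - s := by linarith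
    have hu2 : 0 < 1 - s^2 := by nlinarith
    have hv : 0 < 1 - m^2*s^2 := by nlinarith
    have hkey : Real.sqrt ((1 - s) * (1 - m^2)) ≤ Real.sqrt ((1 - s^2) * (1 - m^2*s^2)) := by
      apply Real.sqrt_le_sqrt
      nlinarith [mul_nonneg (mul_nonneg hu.le (sq_nonneg m)) hu2.le,
        mul_nonneg (mul_nonneg hu.le hs0.le) hv.le]
    have hpos : 0 < Real.sqrt ((1 - s) * (1 - m^2)) :=
      Real.sqrt_pos.mpr (mul_pos hu (by nlinarith))
    have h2 : 1 / Real.sqrt ((1 - s^2) * (1 - m^2*s^2)) ≤ 1 / Real.sqrt ((1 - s) * (1 - m^2)) :=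
      one_div_le_one_div_of_le hpos hkey
    rw [Real.norm_eq_abs, abs_of_nonneg (by positivity)]
    rw [Real.norm_eq_abs]
    have heq : (1 - s) ^ (-(1/2) : ℝ) = 1 / Real.sqrt (1 - s) := by
      rw [Real.rpow_neg hu.le, Real.sqrt_eq_rpow]
      simp
    have hsplit : Real.sqrt ((1 - s) * (1 - m^2)) = Real.sqrt (1 - s) * Real.sqrt (1 - m^2) :=
      Real.sqrt_mul hu.le _
    calc 1 / Real.sqrt ((1 - s^2) * (1 - m^2*s^2))
        ≤ 1 / (Real.sqrt (1 - s) * Real.sqrt (1 - m^2)) := by rw [← hsplit]; exact h2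
      _ = 1 / Real.sqrt (1 - m^2) * (1 / Real.sqrt (1 - s)) := by ring
      _ ≤ |1 / Real.sqrt (1 - m^2) * (1 - s) ^ (-(1/2) : ℝ)| := by
          rw [heq]; exact le_abs_self _

lemma f_int {m : ℝ} (hm0 : 0 < m) (hm1 : m < 1) :
    IntervalIntegrable (fun s : ℝ => Real.sqrt (1 - m^2*s^2) / Real.sqrt (1 - s^2)) volume 0 1 := by
  have hmeas : Measurable (fun s : ℝ => Real.sqrt (1 - m^2*s^2) / Real.sqrt (1 - s^2)) := by
    fun_prop
  refine (base_int.mono_fun hmeas.aestronglyMeasurable ?_)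
  rw [Filter.EventuallyLE, ae_restrict_iff' measurableSet_uIoc]
  filter_upwards with s hs
  rw [Set.uIoc_of_le (by norm_num : (0:ℝ) ≤ 1)] at hs
  obtain ⟨hs0, hs1⟩ := hs
  rcases eq_or_lt_of_le hs1 with h1 | h1
  · subst h1
    simp [Real.norm_eq_abs]
  · have hu : 0 < 1 - s := by linarith
    have hu2 : 0 < 1 - s^2 := by nlinarith
    have hnum : Real.sqrt (1 - m^2*s^2) ≤ 1 :=
      Real.sqrt_le_one.mpr (by nlinarith)
    have hden : Real.sqrt (1 - s) ≤ Real.sqrt (1 - s^2) := by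
      apply Real.sqrt_le_sqrt; nlinarith
    have hsp : 0 < Real.sqrt (1 - s) := Real.sqrt_pos.mpr hu
    have heq : (1 - s) ^ (-(1/2) : ℝ) = 1 / Real.sqrt (1 - s) := by
      rw [Real.rpow_neg hu.le, Real.sqrt_eq_rpow]; simp
    rw [Real.norm_eq_abs, abs_of_nonneg (by positivity), Real.norm_eq_abs,
      abs_of_nonneg (by rw [heq]; positivity), heq]
    calc Real.sqrt (1 - m^2*s^2) / Real.sqrt (1 - s^2)
        ≤ 1 / Real.sqrt (1 - s^2) :=
          div_le_div_of_nonneg_right hnum (Real.sqrt_nonneg _)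
      _ ≤ 1 / Real.sqrt (1 - s) := one_div_le_one_div_of_le hsp hden

lemma K1_pos {m : ℝ} (hm0 : 0 < m) (hm1 : m < 1) : 0 < K1 m := by
  apply intervalIntegral_pos_of_pos_on (g_int hm0 hm1) _ (by norm_num)
  intro s hs
  obtain ⟨hs0, hs1⟩ := hs
  have hu2 : 0 < 1 - s^2 := by nlinarith
  have hv : 0 < 1 - m^2*s^2 := by nlinarith
  positivity

lemma K2_gt {m : ℝ} (hm0 : 0 < m) (hm1 : m < 1) : (1 - m^2) * K1 m < K2 m := by
  have hint : 0 < ∫ s in (0:ℝ)..1,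
      (Real.sqrt (1 - m^2*s^2) / Real.sqrt (1 - s^2)
        - (1 - m^2) * (1 / Real.sqrt ((1 - s^2) * (1 - m^2*s^2)))) := by
    apply intervalIntegral_pos_of_pos_on
      ((f_int hm0 hm1).sub ((g_int hm0 hm1).const_mul _)) _ (by norm_num)
    intro s hs
    obtain ⟨hs0, hs1⟩ := hs
    have hu : 0 < 1 - s^2 := by nlinarith
    have hv : 0 < 1 - m^2*s^2 := by nlinarith
    have hsu : 0 < Real.sqrt (1 - s^2) := Real.sqrt_pos.mpr hu
    have hsv : 0 < Real.sqrt (1 - m^2*s^2) := Real.sqrt_pos.mpr hv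
    have hvv : Real.sqrt (1 - m^2*s^2) * Real.sqrt (1 - m^2*s^2) = 1 - m^2*s^2 :=
      Real.mul_self_sqrt hv.le
    rw [Real.sqrt_mul hu.le]
    rw [sub_pos, mul_one_div]
    rw [div_lt_div_iff₀ (by positivity) hsu]
    have hlhs : Real.sqrt (1 - m^2*s^2) * (Real.sqrt (1 - s^2) * Real.sqrt (1 - m^2*s^2))
        = (1 - m^2*s^2) * Real.sqrt (1 - s^2) := by
      linear_combination Real.sqrt (1 - s^2) * hvv
    rw [hlhs]
    apply mul_lt_mul_of_pos_right _ hsu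
    nlinarith [mul_pos (mul_pos hm0 hm0) hu]
  have heq : (∫ s in (0:ℝ)..1,
      (Real.sqrt (1 - m^2*s^2) / Real.sqrt (1 - s^2)
        - (1 - m^2) * (1 / Real.sqrt ((1 - s^2) * (1 - m^2*s^2)))))
      = K2 m - (1 - m^2) * K1 m := by
    rw [intervalIntegral.integral_sub (f_int hm0 hm1) ((g_int hm0 hm1).const_mul _),
      intervalIntegral.integral_const_mul]
    rfl
  linarith [heq ▸ hint]


/-- The critical velocity `ξ_c = 2(a²+b²) + 4a²(a²−b²)/(a²+b²(K₂(m)/K₁(m)−1))`, `m = a/b`,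
is well defined (the denominator is positive) and satisfies `ξ_c < 4b²`. -/
theorem stmt10 (a b : ℝ) (ha : 0 < a) (hab : a < b) :
    0 < a^2 + b^2*(K2 (a/b)/K1 (a/b) - 1) ∧
    2*(a^2 + b^2) + 4*a^2*(a^2 - b^2)/(a^2 + b^2*(K2 (a/b)/K1 (a/b) - 1)) < 4*b^2 := by
  have hb : 0 < b := ha.trans hab
  have hm0 : 0 < a / b := div_pos ha hb
  have hm1 : a / b < 1 := (div_lt_one hb).mpr hab
  have hK1 := K1_pos hm0 hm1
  have hK2 := K2_gt hm0 hm1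
  have hm2 : (a/b)^2 = a^2/b^2 := div_pow a b 2
  have hr : 1 - a^2/b^2 < K2 (a/b) / K1 (a/b) := by
    rw [lt_div_iff₀ hK1]
    calc (1 - a^2/b^2) * K1 (a/b) = (1 - (a/b)^2) * K1 (a/b) := by rw [hm2]
      _ < K2 (a/b) := hK2
  have hb2 : (0:ℝ) < b^2 := by positivity
  have hcanc : a^2/b^2 * b^2 = a^2 := div_mul_cancel₀ _ hb2.ne'
  have hD : 0 < a^2 + b^2*(K2 (a/b)/K1 (a/b) - 1) := by
    nlinarith [mul_lt_mul_of_pos_right hr hb2]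
  refine ⟨hD, ?_⟩
  have hneg : 4*a^2*(a^2 - b^2)/(a^2 + b^2*(K2 (a/b)/K1 (a/b) - 1)) < 0 :=
    div_neg_of_neg_of_pos (by nlinarith [mul_pos (sub_pos.mpr hab) (by linarith : (0:ℝ) < a + b), mul_pos ha ha]) hD
  nlinarith
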